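/- arXiv:math/0506453 — 3 statements merged into one kernel-verified Lean document; each statement's English description precedes it below -/
import Mathlib

section
/- Let G = (ℤ/2)³ written additively, and F(a,b) = (-1)^{a₁b₁ + a₁b₂ + a₁b₃ + a₂b₂ + a₂b₃ + a₃b₃ + a₁b₂b₃ + b₁a₂b₃ + b₁b₂a₃}. Then the coboundary Φ(a,b,c) = F(b,c)F(a,b+c)/(F(a+b,c)F(a,b)) equals (-1)^{a·(b×c)}, where b×c is the formal cross product and a·(b×c) is computed mod 2. -/
/-- The exponent (in `ℤ/2`) of the octonion cochain on `(ℤ/2)³`. -/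
def octExpo (a b : Fin 3 → ZMod 2) : ZMod 2 :=
  a 0 * b 0 + a 0 * b 1 + a 0 * b 2 + a 1 * b 1 + a 1 * b 2 + a 2 * b 2 +
    a 0 * b 1 * b 2 + b 0 * a 1 * b 2 + b 0 * b 1 * a 2

/-- The octonion cochain `F(a,b) = (-1)^{octExpo a b}` with values in `ℚ`. -/
def octF (a b : Fin 3 → ZMod 2) : ℚ := (-1 : ℚ) ^ (octExpo a b).val

/-- `a·(b×c)` mod 2: the determinant of the matrix with rows `a, b, c` over `ℤ/2`. -/
def tripleProd (a b c : Fin 3 → ZMod 2) : ZMod 2 :=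
  a 0 * (b 1 * c 2 + b 2 * c 1) + a 1 * (b 2 * c 0 + b 0 * c 2) +
    a 2 * (b 0 * c 1 + b 1 * c 0)

lemma sign_add (x y : ZMod 2) : (-1 : ℚ) ^ ((x + y).val) = (-1) ^ x.val * (-1) ^ y.val := by
  have h : ∀ z : ZMod 2, z = 0 ∨ z = 1 := by decide
  rcases h x with rfl | rfl <;> rcases h y with rfl | rfl <;> norm_num [show ZMod.val (1 + 1 : ZMod 2) = 0 from rfl, show ZMod.val (2 : ZMod 2) = 0 from rfl, show ZMod.val (1 : ZMod 2) = 1 from rfl, show ZMod.val (0 : ZMod 2) = 0 from rfl]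

lemma key (a b c : Fin 3 → ZMod 2) :
    octExpo b c + octExpo a (b + c) =
      tripleProd a b c + (octExpo (a + b) c + octExpo a b) := by
  simp only [octExpo, tripleProd, Pi.add_apply]
  generalize a 0 = a0; generalize a 1 = a1; generalize a 2 = a2
  generalize b 0 = b0; generalize b 1 = b1; generalize b 2 = b2
  generalize c 0 = c0; generalize c 1 = c1; generalize c 2 = c2
  revert a0 a1 a2 b0 b1 b2 c0 c1 c2
  decide

/-- the coboundary of the octonion cochain is `(-1)^{a·(b×c)}`. -/
theorem octonion_cochain_coboundary (a b c : Fin 3 → ZMod 2) :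
    octF b c * octF a (b + c) / (octF (a + b) c * octF a b) =
      (-1 : ℚ) ^ (tripleProd a b c).val := by
  have hne : octF (a + b) c * octF a b ≠ 0 := by
    unfold octF
    positivity
  rw [div_eq_iff hne]
  unfold octF
  rw [← sign_add, ← sign_add, ← sign_add, key]
end

section
/- Let F_n(a,b) = (-1)^{Σ_{i≤j} a_i b_j} be the Clifford cochain on (ℤ/2)ⁿ. Then its Fourier transform satisfies Σ_{a,b} F_n(a,b)(-1)^{a·y + b·z} = 2ⁿ·(-1)^{(y₁+y₂)z₁ + (y₂+y₃)z₂ + ⋯ + (y_{n-1}+y_n)z_{n-1} + y_n z_n}. -/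
/-- The Clifford cochain `F_n(a,b) = (-1)^{Σ_{i≤j} a_i b_j}` on `(ℤ/2)ⁿ`,
with values in `ℤ`. -/
def cliffF (n : ℕ) (a b : Fin n → ZMod 2) : ℤ :=
  (-1 : ℤ) ^ (∑ i : Fin n, ∑ j : Fin n, if i ≤ j then a i * b j else 0).val

/-- Dot product mod 2 on `(ℤ/2)ⁿ`. -/
def dotn (n : ℕ) (a y : Fin n → ZMod 2) : ZMod 2 := ∑ i, a i * y i

def chi (x : ZMod 2) : ℤ := (-1)^x.val

lemma chi_add (x y : ZMod 2) : chi (x+y) = chi x * chi y := by revert x y; decide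

lemma chi_sum {ι : Type*} (s : Finset ι) (f : ι → ZMod 2) :
    chi (∑ i ∈ s, f i) = ∏ i ∈ s, chi (f i) := by
  induction s using Finset.cons_induction with
  | empty => simp [chi]
  | cons i s hi ih => rw [Finset.sum_cons, Finset.prod_cons, chi_add, ih]

lemma sum_chi_mul (c : ZMod 2) : ∑ x : ZMod 2, chi (x * c) = if c = 0 then 2 else 0 := by
  revert c; decide

lemma orth (n : ℕ) (c : Fin n → ZMod 2) :
    ∑ a : Fin n → ZMod 2, chi (∑ i, a i * c i) = if c = 0 then 2^n else 0 := by
  have h : ∀ a : Fin n → ZMod 2, chi (∑ i, a i * c i) = ∏ i, chi (a i * c i) :=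
    fun a => chi_sum _ _
  simp_rw [h]
  rw [← Fintype.piFinset_univ, ← Finset.prod_univ_sum (fun _ => Finset.univ) (fun i x => chi (x * c i))]
  simp_rw [sum_chi_mul]
  by_cases hc : c = 0
  · subst hc; simp
  · rw [if_neg hc]
    obtain ⟨i, hi⟩ := Function.ne_iff.mp hc
    refine Finset.prod_eq_zero (Finset.mem_univ i) ?_
    simp only [Pi.zero_apply] at hi
    simp [hi]

section
variable {n : ℕ}

def Sfrom (b : Fin n → ZMod 2) (i : Fin n) : ZMod 2 :=
  ∑ j ∈ Finset.univ.filter (fun j => i ≤ j), b j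

def bzero (y : Fin n → ZMod 2) (i : Fin n) : ZMod 2 :=
  y i + if h : (i : ℕ) + 1 < n then y ⟨(i : ℕ) + 1, h⟩ else 0

lemma filter_split (i : Fin n) :
    Finset.univ.filter (fun j => i ≤ j) =
      insert i (Finset.univ.filter (fun j => i < j)) := by
  ext j
  simp [Finset.mem_insert, le_iff_lt_or_eq, eq_comm, or_comm]

lemma sum_split (f : Fin n → ZMod 2) (i : Fin n) :
    ∑ j ∈ Finset.univ.filter (fun j => i ≤ j), f j
      = f i + ∑ j ∈ Finset.univ.filter (fun j => i < j), f j := by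
  rw [filter_split, Finset.sum_insert (by simp)]

lemma tail_eq (f : Fin n → ZMod 2) (i : Fin n) :
    ∑ j ∈ Finset.univ.filter (fun j => i < j), f j
      = if h : (i : ℕ) + 1 < n then
          ∑ j ∈ Finset.univ.filter (fun j => (⟨(i : ℕ) + 1, h⟩ : Fin n) ≤ j), f j
        else 0 := by
  split_ifs with h
  · apply Finset.sum_congr _ (fun _ _ => rfl)
    ext j
    simp only [Finset.mem_filter, Finset.mem_univ, true_and, Fin.lt_def, Fin.le_def]
    omega
  · rw [Finset.sum_eq_zero]
    intro j hj
    simp only [Finset.mem_filter, Fin.lt_def] at hj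
    have := j.isLt
    omega

lemma two_cancel (u v : ZMod 2) : u + (v + v) = u := by revert u v; decide

lemma Sfrom_bzero (y : Fin n → ZMod 2) (i : Fin n) : Sfrom (bzero y) i = y i := by
  have key : ∀ m : ℕ, ∀ i : Fin n, n - (i : ℕ) ≤ m → Sfrom (bzero y) i = y i := by
    intro m
    induction m with
    | zero => intro i h; have := i.isLt; omega
    | succ m ih =>
      intro i h
      rw [Sfrom, sum_split, tail_eq]
      split_ifs with hlt
      · rw [show (∑ j ∈ Finset.univ.filter
            (fun j => (⟨(i:ℕ)+1, hlt⟩ : Fin n) ≤ j), bzero y j) = Sfrom (bzero y) ⟨(i:ℕ)+1, hlt⟩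
            from rfl,
          ih ⟨(i:ℕ)+1, hlt⟩ (by simp only [Fin.val_mk]; omega)]
        rw [show bzero y i = y i + y ⟨(i:ℕ)+1, hlt⟩ from by rw [bzero, dif_pos hlt]]
        rw [add_assoc]
        exact two_cancel _ _
      · rw [add_zero, show bzero y i = y i + 0 from by rw [bzero, dif_neg hlt], add_zero]
  exact key n i (by omega)

lemma eq_bzero (y b : Fin n → ZMod 2) (hb : ∀ i, Sfrom b i = y i) : b = bzero y := by
  funext i
  have h1 := hb i
  rw [Sfrom, sum_split, tail_eq] at h1
  rw [bzero]
  split_ifs at h1 ⊢ with hlt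
  · rw [show (∑ j ∈ Finset.univ.filter
        (fun j => (⟨(i:ℕ)+1, hlt⟩ : Fin n) ≤ j), b j) = Sfrom b ⟨(i:ℕ)+1, hlt⟩ from rfl,
      hb ⟨(i:ℕ)+1, hlt⟩] at h1
    have key : ∀ u v w : ZMod 2, u + v = w → u = w + v := by decide
    exact key _ _ _ h1
  · rw [add_zero] at h1
    rw [add_zero]
    exact h1

lemma rearrange (a b y : Fin n → ZMod 2) :
    (∑ i : Fin n, ∑ j : Fin n, if i ≤ j then a i * b j else 0) + (∑ i, a i * y i)
      = ∑ i, a i * (y i + Sfrom b i) := by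
  rw [← Finset.sum_add_distrib]
  apply Finset.sum_congr rfl
  intro i _
  rw [mul_add, Sfrom, Finset.mul_sum, ← Finset.sum_filter, add_comm]

end

/-- the Fourier transform of the Clifford cochain on `(ℤ/2)ⁿ` equals
`2ⁿ·(-1)^{(y₁+y₂)z₁ + (y₂+y₃)z₂ + ⋯ + (y_{n-1}+y_n)z_{n-1} + y_n z_n}`. -/
theorem clifford_cochain_fourier (n : ℕ) (y z : Fin n → ZMod 2) :
    (∑ p : (Fin n → ZMod 2) × (Fin n → ZMod 2),
        cliffF n p.1 p.2 * (-1 : ℤ) ^ (dotn n p.1 y + dotn n p.2 z).val) =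
      (2 : ℤ) ^ n * (-1 : ℤ) ^
        (∑ i : Fin n,
          (y i + if h : (i : ℕ) + 1 < n then y ⟨(i : ℕ) + 1, h⟩ else 0) * z i).val := by
  have hterm : ∀ a b : Fin n → ZMod 2,
      cliffF n a b * (-1 : ℤ) ^ (dotn n a y + dotn n b z).val
        = chi (∑ i, a i * (y i + Sfrom b i)) * chi (dotn n b z) := by
    intro a b
    have h1 : cliffF n a b * (-1 : ℤ) ^ (dotn n a y + dotn n b z).val
        = chi ((∑ i : Fin n, ∑ j : Fin n, if i ≤ j then a i * b j else 0)
            + (dotn n a y + dotn n b z)) := by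
      rw [chi_add]; rfl
    rw [h1, ← add_assoc, show dotn n a y = ∑ i, a i * y i from rfl, rearrange, chi_add]
  calc (∑ p : (Fin n → ZMod 2) × (Fin n → ZMod 2),
        cliffF n p.1 p.2 * (-1 : ℤ) ^ (dotn n p.1 y + dotn n p.2 z).val)
      = ∑ b : Fin n → ZMod 2, ∑ a : Fin n → ZMod 2,
          chi (∑ i, a i * (y i + Sfrom b i)) * chi (dotn n b z) := by
        rw [Fintype.sum_prod_type, Finset.sum_comm]
        exact Finset.sum_congr rfl fun b _ => Finset.sum_congr rfl fun a _ => hterm a b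
    _ = ∑ b : Fin n → ZMod 2,
          (if (fun i => y i + Sfrom b i) = 0 then (2:ℤ)^n else 0) * chi (dotn n b z) := by
        refine Finset.sum_congr rfl fun b _ => ?_
        rw [← Finset.sum_mul, orth n (fun i => y i + Sfrom b i)]
    _ = ∑ b : Fin n → ZMod 2,
          (if b = bzero y then (2:ℤ)^n * chi (dotn n b z) else 0) := by
        refine Finset.sum_congr rfl fun b _ => ?_
        have hiff : ((fun i => y i + Sfrom b i) = 0) ↔ b = bzero y := by
          constructor
          · intro h
            apply eq_bzero
            intro i
            have := congrFun h i
            have key : ∀ u v : ZMod 2, u + v = 0 → v = u := by decide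
            exact key _ _ this
          · intro h
            funext i
            rw [h, Sfrom_bzero]
            exact (by decide : ∀ u : ZMod 2, u + u = 0) _
        by_cases hb : b = bzero y
        · rw [if_pos (hiff.mpr hb), if_pos hb]
        · rw [if_neg (fun h => hb (hiff.mp h)), if_neg hb, zero_mul]
    _ = (2:ℤ)^n * chi (dotn n (bzero y) z) := by
        rw [Finset.sum_ite_eq' Finset.univ (bzero y)
          (fun b => (2:ℤ)^n * chi (dotn n b z)), if_pos (Finset.mem_univ _)]
    _ = (2 : ℤ) ^ n * (-1 : ℤ) ^
        (∑ i : Fin n,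
          (y i + if h : (i : ℕ) + 1 < n then y ⟨(i : ℕ) + 1, h⟩ else 0) * z i).val := rfl
end

section
/- In the U(1)-Yang-Mills theory on (ℤ/2)ⁿ with φⁱ = 1 + αⁱ and hermiticity condition conj(φⁱ) = Rᵢφⁱ, any zero-curvature connection satisfies: writing |φⁱ|² = λᵢ², the functions λᵢ ≥ 0 obey ∂ⁱλᵢ = 0 for all i, and at every point x and all i,j, λᵢ(x)·(∂ⁱλⱼ)(x) = 0. -/
/-- Shift of the `i`-th coordinate on functions on `(ℤ/2)ⁿ`. -/
def Rsh {n : ℕ} (i : Fin n) (f : (Fin n → ZMod 2) → ℂ) : (Fin n → ZMod 2) → ℂ :=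
  fun x => f (x + Pi.single i 1)

lemma double_shift {n : ℕ} (x : Fin n → ZMod 2) (i : Fin n) :
    x + Pi.single i 1 + Pi.single i 1 = x := by
  funext k
  simp only [Pi.add_apply, add_assoc]
  rw [CharTwo.add_self_eq_zero, add_zero]

/-- for a hermitian (`conj φⁱ = Rᵢφⁱ`) zero-curvature connection on
`(ℤ/2)ⁿ` (zero curvature: `φⁱRᵢφʲ = φʲRⱼφⁱ`), the moduli `λᵢ = |φⁱ| ≥ 0` satisfy
`∂ⁱλᵢ = 0` and `λᵢ·∂ⁱλⱼ = 0` at every point, for all `i, j`. -/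
theorem flat_connection_moduli {n : ℕ}
    (φ : Fin n → ((Fin n → ZMod 2) → ℂ))
    (hherm : ∀ (i : Fin n) (x : Fin n → ZMod 2),
      (starRingEnd ℂ) (φ i x) = φ i (x + Pi.single i 1))
    (hflat : ∀ i j : Fin n, φ i * Rsh i (φ j) = φ j * Rsh j (φ i))
    (lam : Fin n → (Fin n → ZMod 2) → ℝ)
    (hlam : ∀ (i : Fin n) (x : Fin n → ZMod 2), lam i x = ‖φ i x‖) :
    (∀ (i : Fin n) (x : Fin n → ZMod 2), lam i (x + Pi.single i 1) - lam i x = 0) ∧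
    (∀ (i j : Fin n) (x : Fin n → ZMod 2),
      lam i x * (lam j (x + Pi.single i 1) - lam j x) = 0) := by
  -- modulus is shift-invariant in direction i
  have hmod : ∀ (i : Fin n) (x : Fin n → ZMod 2),
      lam i (x + Pi.single i 1) = lam i x := by
    intro i x
    rw [hlam, hlam, ← hherm i x, Complex.norm_conj]
  -- pointwise flatness
  have key : ∀ (i j : Fin n) (x : Fin n → ZMod 2),
      φ i x * φ j (x + Pi.single i 1) = φ j x * φ i (x + Pi.single j 1) := by
    intro i j x
    have := congrFun (hflat i j) x
    simpa [Rsh, Pi.mul_apply] using this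
  -- hermitian square
  have herm2 : ∀ (i : Fin n) (x : Fin n → ZMod 2),
      φ i x * φ i (x + Pi.single i 1) = ((lam i x : ℝ) : ℂ) ^ 2 := by
    intro i x
    rw [← hherm i x, Complex.mul_conj, Complex.normSq_eq_norm_sq, hlam]
    push_cast
    ring
  refine ⟨fun i x => by rw [hmod, sub_self], ?_⟩
  intro i j x
  -- main identity: λᵢ(x)² φʲ(x) = λᵢ(x+eⱼ)² φʲ(x)
  have main : ((lam i x : ℝ) : ℂ) ^ 2 * φ j x
      = ((lam i (x + Pi.single j 1) : ℝ) : ℂ) ^ 2 * φ j x := by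
    have h1 := key i j (x + Pi.single i 1)
    rw [double_shift] at h1
    -- h1 : φ i (x+eᵢ) * φ j x = φ j (x+eᵢ) * φ i (x+eᵢ+eⱼ)
    have h2 := key i j x
    -- combine
    calc ((lam i x : ℝ) : ℂ) ^ 2 * φ j x
        = φ i x * (φ i (x + Pi.single i 1) * φ j x) := by
          rw [← mul_assoc, herm2]
      _ = φ i x * (φ j (x + Pi.single i 1) * φ i (x + Pi.single i 1 + Pi.single j 1)) := by
          rw [h1]
      _ = (φ i x * φ j (x + Pi.single i 1)) * φ i (x + Pi.single i 1 + Pi.single j 1) := by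
          ring
      _ = (φ j x * φ i (x + Pi.single j 1)) * φ i (x + Pi.single j 1 + Pi.single i 1) := by
          rw [h2]
          congr 2
          funext k
          simp [Pi.add_apply]
          ring
      _ = φ j x * (φ i (x + Pi.single j 1) * φ i (x + Pi.single j 1 + Pi.single i 1)) := by
          ring
      _ = ((lam i (x + Pi.single j 1) : ℝ) : ℂ) ^ 2 * φ j x := by
          rw [herm2]; ring
  have habs : lam i x * lam j (x + Pi.single i 1) = lam j x * lam i (x + Pi.single j 1) := by
    have := congrArg (fun z : ℂ => ‖z‖) (key i j x)
    simpa [map_mul, norm_mul, ← hlam] using this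
  by_cases hz : φ j x = 0
  · have hjz : lam j x = 0 := by rw [hlam, hz, norm_zero]
    have : lam i x * lam j (x + Pi.single i 1) = 0 := by rw [habs, hjz, zero_mul]
    rw [mul_sub, this, hjz, mul_zero, sub_zero]
  · have hsq : ((lam i x : ℝ) : ℂ) ^ 2 = ((lam i (x + Pi.single j 1) : ℝ) : ℂ) ^ 2 :=
      mul_right_cancel₀ hz main
    have hsqR : (lam i x) ^ 2 = (lam i (x + Pi.single j 1)) ^ 2 := by
      exact_mod_cast hsq
    have hnn : ∀ (k : Fin n) (y : Fin n → ZMod 2), 0 ≤ lam k y := by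
      intro k y; rw [hlam]; exact norm_nonneg _
    have heq : lam i x = lam i (x + Pi.single j 1) := by
      have h1 : |lam i x| = |lam i (x + Pi.single j 1)| := by
        rw [← Real.sqrt_sq_eq_abs, ← Real.sqrt_sq_eq_abs, hsqR]
      rwa [abs_of_nonneg (hnn i x), abs_of_nonneg (hnn i _)] at h1
    rw [mul_sub, habs, ← heq]
    ring
end
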